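/- Let 0 < α ≤ 1 and let Φ be a positive increasing function on (0,∞) satisfying Φ(2r) ≤ D·Φ(r) for all r > 0 with doubling constant 1 ≤ D < 2ⁿ. There exists a constant C > 0 such that for every f ∈ L^{1,Φ}(ℝⁿ), every ball B(x₀,r), and every x ∈ B(x₀,r), if f vanishes on B(x₀,2r) then S_α(f)(x) ≤ C ‖f‖_{L^{1,Φ}} · Φ(r)/|B(x₀,r)|, where |B(x₀,r)| denotes the Lebesgue measure of the ball B(x₀,r). -/

import Mathlib

open MeasureTheory Metric Set

noncomputable section

/-- `ℝⁿ` as a Euclidean space. -/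
abbrev Rn (n : ℕ) := EuclideanSpace ℝ (Fin n)

/-- The family `𝒞_α` of real functions supported in the closed unit ball, with vanishing
integral, satisfying the Hölder condition `|φ x - φ x'| ≤ |x - x'|^α`. -/
def Calpha (n : ℕ) (α : ℝ) : Set (Rn n → ℝ) :=
  {φ | (∀ x : Rn n, 1 < ‖x‖ → φ x = 0) ∧ ((∫ x, φ x) = 0) ∧
    ∀ x x' : Rn n, |φ x - φ x'| ≤ ‖x - x'‖ ^ α}

/-- `A_α(f)(y,t) = sup_{φ ∈ 𝒞_α} |(f * φ_t)(y)|`, where `φ_t(x) = t⁻ⁿ φ(x/t)`. -/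
def Aalpha {n : ℕ} (α : ℝ) (f : Rn n → ℝ) (y : Rn n) (t : ℝ) : ℝ :=
  ⨆ φ ∈ Calpha n α, |∫ z, (t ^ n)⁻¹ * φ (t⁻¹ • (y - z)) * f z|

/-- The intrinsic square function `S_{α,β}` of aperture `β`. -/
def Salpha {n : ℕ} (α β : ℝ) (f : Rn n → ℝ) (x : Rn n) : ℝ :=
  Real.sqrt (∫ p in {p : Rn n × ℝ | 0 < p.2 ∧ dist x p.1 < β * p.2},
    Aalpha α f p.1 p.2 ^ 2 / p.2 ^ (n + 1))

/-- The intrinsic `g^*_λ` function. -/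
def gstarAlpha {n : ℕ} (α lam : ℝ) (f : Rn n → ℝ) (x : Rn n) : ℝ :=
  Real.sqrt (∫ p in {p : Rn n × ℝ | 0 < p.2},
    (p.2 / (p.2 + dist x p.1)) ^ (lam * n) * Aalpha α f p.1 p.2 ^ 2 / p.2 ^ (n + 1))

/-- The intrinsic Littlewood–Paley `g`-function. -/
def gAlpha {n : ℕ} (α : ℝ) (f : Rn n → ℝ) (x : Rn n) : ℝ :=
  Real.sqrt (∫ t in Ioi (0 : ℝ), Aalpha α f x t ^ 2 / t)

/-- The commutator kernel
`sup_{φ ∈ 𝒞_α} |∫ (b x - b z) φ_t (y - z) f z dz|`. -/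
def commAalpha {n : ℕ} (α : ℝ) (b f : Rn n → ℝ) (x y : Rn n) (t : ℝ) : ℝ :=
  ⨆ φ ∈ Calpha n α, |∫ z, (b x - b z) * ((t ^ n)⁻¹ * φ (t⁻¹ • (y - z))) * f z|

/-- The commutator `[b, S_α]`. -/
def commS {n : ℕ} (α : ℝ) (b f : Rn n → ℝ) (x : Rn n) : ℝ :=
  Real.sqrt (∫ p in {p : Rn n × ℝ | 0 < p.2 ∧ dist x p.1 < p.2},
    commAalpha α b f x p.1 p.2 ^ 2 / p.2 ^ (n + 1))

/-- The commutator `[b, g^*_{λ,α}]`. -/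
def commGstar {n : ℕ} (α lam : ℝ) (b f : Rn n → ℝ) (x : Rn n) : ℝ :=
  Real.sqrt (∫ p in {p : Rn n × ℝ | 0 < p.2},
    (p.2 / (p.2 + dist x p.1)) ^ (lam * n) * commAalpha α b f x p.1 p.2 ^ 2 / p.2 ^ (n + 1))

/-- The commutator `[b, g_α]`. -/
def commG {n : ℕ} (α : ℝ) (b f : Rn n → ℝ) (x : Rn n) : ℝ :=
  Real.sqrt (∫ t in Ioi (0 : ℝ), commAalpha α b f x x t ^ 2 / t)

/-- `A` is an admissible constant for `f` in the generalized Morrey space `L^{p,Φ}`: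
`∫_{B(x₀,r)} |f|^p ≤ A^p Φ(r)` for all balls.  The Morrey norm `‖f‖_{L^{p,Φ}}` is the least
such `A ≥ 0`, and `f ∈ L^{p,Φ}` iff some such `A` exists. -/
def MorreyBound {n : ℕ} (p : ℝ) (Φ : ℝ → ℝ) (f : Rn n → ℝ) (A : ℝ) : Prop :=
  ∀ (x₀ : Rn n) (r : ℝ), 0 < r → (∫ x in ball x₀ r, |f x| ^ p) ≤ A ^ p * Φ r

/-- `A` is an admissible constant for `g` in the weak space `WL^{1,Φ}`:
`σ |{x ∈ B(x₀,r) : g x > σ}| ≤ A Φ(r)` for all balls and all `σ > 0`. -/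
def WeakMorreyBound {n : ℕ} (Φ : ℝ → ℝ) (g : Rn n → ℝ) (A : ℝ) : Prop :=
  ∀ (x₀ : Rn n) (r : ℝ), 0 < r → ∀ σ : ℝ, 0 < σ →
    σ * (volume {x ∈ ball x₀ r | σ < g x}).toReal ≤ A * Φ r

/-- Average of `b` over the ball `B(x₀,r)`. -/
def ballAvg {n : ℕ} (b : Rn n → ℝ) (x₀ : Rn n) (r : ℝ) : ℝ :=
  (volume (ball x₀ r)).toReal⁻¹ * ∫ y in ball x₀ r, b y

/-- `b ∈ BMO(ℝⁿ)`. -/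
def IsBMO {n : ℕ} (b : Rn n → ℝ) : Prop :=
  LocallyIntegrable b volume ∧ ∃ K : ℝ, ∀ (x₀ : Rn n) (r : ℝ), 0 < r →
    (∫ x in ball x₀ r, |b x - ballAvg b x₀ r|) ≤ K * (volume (ball x₀ r)).toReal

/-- The Hardy–Littlewood maximal function. -/
def hlMaximal {n : ℕ} (g : Rn n → ℝ) (x : Rn n) : ℝ :=
  ⨆ (x₀ : Rn n) (r : ℝ), ⨆ (_ : 0 < r ∧ x ∈ ball x₀ r),
    (volume (ball x₀ r)).toReal⁻¹ * ∫ y in ball x₀ r, |g y|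

/-! For `(y, t)` in the cone over `x`, `A_α f (y, t)` only sees `f` on `B(y, 2t)`. Below height
`r / 3` that ball lies in `B(x₀, 2r)`, where `f` vanishes. Above it the Morrey condition gives
`A_α f (y, t) ≲ t⁻ⁿ Φ(2t)`, and iterating the doubling condition gives
`Φ(2t) ≲ (t / r)^γ Φ(r)` with `2^γ = D`. Since `γ < n`, the square of this bound is integrable
over the cone above height `r / 3`, with integral `≲ (Φ(r) / rⁿ)²`. -/

open Module

/-- `Γ(x) ∩ {t > s}`, the part above height `s` of the cone of aperture `1` over `x`. -/
def coneAbove {E : Type*} [PseudoMetricSpace E] (x : E) (s : ℝ) : Set (E × ℝ) :=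
  {p | s < p.2 ∧ dist x p.1 < p.2}

lemma measurableSet_coneAbove {E : Type*} [PseudoMetricSpace E] [MeasurableSpace E]
    [OpensMeasurableSpace E] (x : E) (s : ℝ) : MeasurableSet (coneAbove x s) :=
  ((isOpen_lt continuous_const continuous_snd).inter
    (isOpen_lt (continuous_const.dist continuous_fst) continuous_snd)).measurableSet

lemma indicator_coneAbove_apply {E : Type*} [PseudoMetricSpace E] (x : E) (s : ℝ) (g : ℝ → ℝ)
    (y : E) (t : ℝ) :
    (coneAbove x s).indicator (fun p => g p.2) (y, t)
      = (Ioi s).indicator (fun t => (ball x t).indicator (fun _ => g t) y) t := by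
  by_cases hst : s < t <;> simp [coneAbove, indicator, hst, dist_comm]

section ConeIntegral

variable {E : Type*} [NormedAddCommGroup E] [NormedSpace ℝ E] [FiniteDimensional ℝ E]
  [MeasurableSpace E] [BorelSpace E] (μ : Measure E) [μ.IsAddHaarMeasure]

lemma integrable_indicator_coneAbove_slice (x : E) (s : ℝ) (g : ℝ → ℝ) (t : ℝ) :
    Integrable (fun y => (coneAbove x s).indicator (fun p => g p.2) (y, t)) μ := by
  simp_rw [indicator_coneAbove_apply]
  by_cases hst : s < t
  · simpa [indicator_of_mem (mem_Ioi.mpr hst)] using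
      (integrable_indicator_iff measurableSet_ball).mpr
        (integrableOn_const measure_ball_lt_top.ne)
  · simp [indicator_of_notMem (notMem_Ioi.mpr (not_lt.mp hst))]

lemma integral_indicator_coneAbove_slice (x : E) {s : ℝ} (hs : 0 ≤ s) (g : ℝ → ℝ) (t : ℝ) :
    ∫ y, (coneAbove x s).indicator (fun p => g p.2) (y, t) ∂μ
      = (Ioi s).indicator (fun t => μ.real (ball 0 1) * (t ^ finrank ℝ E * g t)) t := by
  simp_rw [indicator_coneAbove_apply]
  by_cases hst : s < t
  · have ht : 0 < t := hs.trans_lt hst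
    simp only [indicator_of_mem (mem_Ioi.mpr hst)]
    rw [integral_indicator_const _ measurableSet_ball, smul_eq_mul, measureReal_def,
      Measure.addHaar_ball_of_pos μ x ht, ENNReal.toReal_mul,
      ENNReal.toReal_ofReal (by positivity), ← measureReal_def]
    ring
  · simp [indicator_of_notMem (notMem_Ioi.mpr (not_lt.mp hst))]

lemma integrableOn_coneAbove_and_setIntegral_comp_snd (x : E) {s : ℝ} (hs : 0 ≤ s) {g : ℝ → ℝ}
    (hg : Measurable g) (hgi : IntegrableOn (fun t => t ^ finrank ℝ E * g t) (Ioi s)) :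
    IntegrableOn (fun p => g p.2) (coneAbove x s) (μ.prod volume) ∧
      ∫ p in coneAbove x s, g p.2 ∂(μ.prod volume)
        = μ.real (ball 0 1) * ∫ t in Ioi s, t ^ finrank ℝ E * g t := by
  have hT := measurableSet_coneAbove x s
  have hmeas : AEStronglyMeasurable ((coneAbove x s).indicator fun p => g p.2) (μ.prod volume) :=
    ((hg.comp measurable_snd).indicator hT).aestronglyMeasurable
  have hint : Integrable ((coneAbove x s).indicator fun p => g p.2) (μ.prod volume) := by
    refine (integrable_prod_iff' hmeas).mpr ⟨.of_forall fun t => ?_, ?_⟩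
    · exact integrable_indicator_coneAbove_slice μ x s g t
    · simp_rw [norm_indicator_eq_indicator_norm, Real.norm_eq_abs,
        integral_indicator_coneAbove_slice μ x hs (fun t => |g t|)]
      refine (integrable_indicator_iff measurableSet_Ioi).mpr
        (IntegrableOn.congr_fun (hgi.norm.const_mul (μ.real (ball 0 1)))
          (fun t ht => ?_) measurableSet_Ioi)
      simp [abs_of_pos (hs.trans_lt ht)]
  refine ⟨(integrable_indicator_iff hT).mp hint, ?_⟩
  rw [← integral_indicator hT, integral_prod_symm _ hint]
  simp_rw [integral_indicator_coneAbove_slice μ x hs g]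
  rw [integral_indicator measurableSet_Ioi, integral_const_mul]

lemma integrableOn_coneAbove_and_setIntegral_sq_rpow_div (x : E) {s a : ℝ} (hs : 0 < s)
    (ha : a < 0) :
    IntegrableOn (fun p => (p.2 ^ a) ^ 2 / p.2 ^ (finrank ℝ E + 1)) (coneAbove x s)
        (μ.prod volume) ∧
      ∫ p in coneAbove x s, (p.2 ^ a) ^ 2 / p.2 ^ (finrank ℝ E + 1) ∂(μ.prod volume)
        = μ.real (ball 0 1) * (s ^ a) ^ 2 / (-(2 * a)) := by
  have hprofile : EqOn (fun t : ℝ => t ^ (2 * a - 1))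
      (fun t => t ^ finrank ℝ E * ((t ^ a) ^ 2 / t ^ (finrank ℝ E + 1))) (Ioi s) := by
    intro t ht
    have ht : 0 < t := hs.trans ht
    dsimp only
    rw [Real.rpow_sub ht, Real.rpow_one, mul_comm, Real.rpow_mul ht.le, Real.rpow_two]
    field_simp
    ring
  have hexp : 2 * a - 1 < -1 := by linarith
  obtain ⟨hint, heq⟩ := integrableOn_coneAbove_and_setIntegral_comp_snd μ x hs.le
    (g := fun t => (t ^ a) ^ 2 / t ^ (finrank ℝ E + 1)) (by fun_prop)
    ((integrableOn_Ioi_rpow_of_lt hexp hs).congr_fun hprofile measurableSet_Ioi)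
  refine ⟨hint, ?_⟩
  rw [heq, ← setIntegral_congr_fun measurableSet_Ioi hprofile, integral_Ioi_rpow_of_lt hexp hs,
    sub_add_cancel, mul_comm 2 a, Real.rpow_mul hs.le, Real.rpow_two]
  ring

end ConeIntegral

lemma exists_two_rpow_eq_of_one_le_of_lt_two_pow {D : ℝ} {n : ℕ} (hD1 : 1 ≤ D)
    (hD2 : D < 2 ^ n) : ∃ γ : ℝ, 0 ≤ γ ∧ γ < n ∧ D = 2 ^ γ :=
  ⟨Real.logb 2 D, Real.logb_nonneg one_lt_two hD1,
    (Real.logb_lt_iff_lt_rpow one_lt_two (by linarith)).mpr (by rwa [Real.rpow_natCast]),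
    (Real.rpow_logb two_pos (by norm_num) (by linarith)).symm⟩

section Doubling

variable {Φ : ℝ → ℝ} {γ : ℝ}

lemma apply_two_pow_mul_le_of_doubling (hΦdoub : ∀ r, 0 < r → Φ (2 * r) ≤ 2 ^ γ * Φ r)
    (k : ℕ) {s : ℝ} (hs : 0 < s) : Φ (2 ^ k * s) ≤ ((2 : ℝ) ^ k) ^ γ * Φ s := by
  induction k with
  | zero => simp
  | succ k ih =>
    calc Φ (2 ^ (k + 1) * s) = Φ (2 * (2 ^ k * s)) := by ring_nf
      _ ≤ 2 ^ γ * Φ (2 ^ k * s) := hΦdoub _ (by positivity)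
      _ ≤ 2 ^ γ * (((2 : ℝ) ^ k) ^ γ * Φ s) := by gcongr
      _ = ((2 : ℝ) ^ (k + 1)) ^ γ * Φ s := by
        rw [pow_succ', Real.mul_rpow zero_le_two (by positivity), mul_assoc]

lemma apply_le_rpow_mul_of_doubling (hγ : 0 ≤ γ) (hΦmono : ∀ r s, 0 < r → r ≤ s → Φ r ≤ Φ s)
    (hΦdoub : ∀ r, 0 < r → Φ (2 * r) ≤ 2 ^ γ * Φ r) {s t : ℝ} (hs : 0 < s) (hΦs : 0 ≤ Φ s)
    (hst : s ≤ t) :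
    Φ t ≤ (2 * t / s) ^ γ * Φ s := by
  obtain ⟨k, hk, hk'⟩ := exists_nat_pow_near ((one_le_div hs).mpr hst) one_lt_two
  calc Φ t ≤ Φ (2 ^ (k + 1) * s) := hΦmono t _ (hs.trans_le hst) ((div_le_iff₀ hs).mp hk'.le)
    _ ≤ ((2 : ℝ) ^ (k + 1)) ^ γ * Φ s := apply_two_pow_mul_le_of_doubling hΦdoub _ hs
    _ ≤ (2 * t / s) ^ γ * Φ s := by
      gcongr
      rw [pow_succ', mul_div_assoc]
      gcongr

end Doubling

section IntrinsicSquareFunction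

variable {n : ℕ} {α : ℝ}

lemma Calpha.apply_eq_zero_of_lt_dist {φ : Rn n → ℝ} (hφ : φ ∈ Calpha n α) {y z : Rn n} {t : ℝ}
    (ht : 0 < t) (hyz : t < dist y z) : φ (t⁻¹ • (y - z)) = 0 :=
  hφ.1 _ <| by
    rwa [norm_smul, norm_inv, Real.norm_of_nonneg ht.le, ← dist_eq_norm, one_lt_inv_mul₀ ht]

lemma Calpha.abs_le (hn : 0 < n) {φ : Rn n → ℝ} (hφ : φ ∈ Calpha n α) (u : Rn n) :
    |φ u| ≤ 3 ^ α := by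
  rcases le_or_gt ‖u‖ 1 with hu | hu
  · -- `φ` vanishes at `u - e`, which lies outside the unit ball when `‖e‖ = 3`
    set e : Rn n := EuclideanSpace.single ⟨0, hn⟩ 3
    have he : ‖e‖ = 3 := by simp [e]
    have hout : 1 < ‖u - e‖ := by
      linarith [norm_sub_norm_le e u, norm_sub_rev e u]
    simpa [hφ.1 _ hout, he] using hφ.2.2 u (u - e)
  · simpa [hφ.1 u hu] using Real.rpow_nonneg zero_le_three α

lemma Aalpha_nonneg (f : Rn n → ℝ) (y : Rn n) (t : ℝ) : 0 ≤ Aalpha α f y t :=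
  Real.iSup_nonneg fun _ => Real.iSup_nonneg fun _ => abs_nonneg _

lemma Aalpha_eq_zero_of_forall_ball_eq_zero {f : Rn n → ℝ} {y : Rn n} {t : ℝ} (ht : 0 < t)
    (hf : ∀ z ∈ ball y (2 * t), f z = 0) : Aalpha α f y t = 0 := by
  refine le_antisymm (Real.iSup_le (fun φ => Real.iSup_le (fun hφ => ?_) le_rfl) le_rfl)
    (Aalpha_nonneg f y t)
  rw [integral_eq_zero_of_ae (.of_forall fun z => ?_), abs_zero]
  by_cases hz : z ∈ ball y (2 * t)
  · simp [hf z hz]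
  · rw [mem_ball', not_lt] at hz
    simp [Calpha.apply_eq_zero_of_lt_dist hφ ht (by linarith)]

lemma Aalpha_le_integral (hn : 0 < n) {f : Rn n → ℝ} (hf : LocallyIntegrable f volume)
    (y : Rn n) {t : ℝ} (ht : 0 < t) :
    Aalpha α f y t ≤ 3 ^ α / t ^ n * ∫ z in ball y (2 * t), |f z| := by
  have hrhs : 0 ≤ 3 ^ α / t ^ n * ∫ z in ball y (2 * t), |f z| :=
    mul_nonneg (by positivity) (setIntegral_nonneg measurableSet_ball fun _ _ => abs_nonneg _)
  refine Real.iSup_le (fun φ => Real.iSup_le (fun hφ => ?_) hrhs) hrhs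
  have hsupp : ∀ z ∉ ball y (2 * t), (t ^ n)⁻¹ * φ (t⁻¹ • (y - z)) * f z = 0 := fun z hz => by
    rw [Calpha.apply_eq_zero_of_lt_dist hφ ht (by rw [mem_ball', not_lt] at hz; linarith),
      mul_zero, zero_mul]
  have hfint : IntegrableOn f (ball y (2 * t)) :=
    (hf.integrableOn_isCompact (isCompact_closedBall y (2 * t))).mono_set ball_subset_closedBall
  calc |∫ z, (t ^ n)⁻¹ * φ (t⁻¹ • (y - z)) * f z|
      = |∫ z in ball y (2 * t), (t ^ n)⁻¹ * φ (t⁻¹ • (y - z)) * f z| := by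
        rw [setIntegral_eq_integral_of_forall_compl_eq_zero hsupp]
    _ ≤ ∫ z in ball y (2 * t), |(t ^ n)⁻¹ * φ (t⁻¹ • (y - z)) * f z| := by
        simpa only [Real.norm_eq_abs] using
          norm_integral_le_integral_norm (fun z => (t ^ n)⁻¹ * φ (t⁻¹ • (y - z)) * f z)
    _ ≤ ∫ z in ball y (2 * t), 3 ^ α / t ^ n * |f z| := by
        refine integral_mono_of_nonneg (.of_forall fun _ => abs_nonneg _)
          (hfint.abs.const_mul _) (.of_forall fun z => ?_)
        dsimp only
        rw [abs_mul, abs_mul, abs_inv, abs_of_pos (by positivity : (0 : ℝ) < t ^ n),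
          div_eq_inv_mul]
        gcongr
        exact Calpha.abs_le hn hφ _
    _ = 3 ^ α / t ^ n * ∫ z in ball y (2 * t), |f z| := integral_const_mul _ _

lemma Aalpha_le_of_morreyBound (hn : 0 < n) {Φ : ℝ → ℝ} {γ : ℝ} (hγ : 0 ≤ γ)
    (hΦmono : ∀ r s, 0 < r → r ≤ s → Φ r ≤ Φ s) (hΦdoub : ∀ r, 0 < r → Φ (2 * r) ≤ 2 ^ γ * Φ r)
    {f : Rn n → ℝ} (hf : LocallyIntegrable f volume) {A : ℝ} (hA : 0 ≤ A)
    (hM : MorreyBound 1 Φ f A) (y : Rn n) {s t : ℝ} (hs : 0 < s) (hΦs : 0 ≤ Φ s) (hst : s ≤ t) :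
    Aalpha α f y t ≤ 3 ^ α * 4 ^ γ * A * Φ s / s ^ n * (t / s) ^ (γ - n) := by
  have ht : 0 < t := hs.trans_le hst
  calc Aalpha α f y t ≤ 3 ^ α / t ^ n * ∫ z in ball y (2 * t), |f z| :=
        Aalpha_le_integral hn hf y ht
    _ ≤ 3 ^ α / t ^ n * (A * Φ (2 * t)) := by
      gcongr
      simpa using hM y (2 * t) (by positivity)
    _ ≤ 3 ^ α / t ^ n * (A * ((2 * (2 * t) / s) ^ γ * Φ s)) := by
      gcongr
      exact apply_le_rpow_mul_of_doubling hγ hΦmono hΦdoub hs hΦs (by linarith)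
    _ = 3 ^ α * 4 ^ γ * A * Φ s / s ^ n * (t / s) ^ (γ - n) := by
      rw [Real.rpow_sub (by positivity), Real.rpow_natCast,
        show 2 * (2 * t) / s = 4 * (t / s) by ring, Real.mul_rpow (by norm_num) (by positivity),
        div_pow]
      field_simp

lemma Salpha_le_of_le_rpow {f : Rn n → ℝ} {x : Rn n} {s a M : ℝ} (hs : 0 < s) (ha : a < 0)
    (hM : 0 ≤ M) (hnear : ∀ y t, 0 < t → t ≤ s → dist x y < t → Aalpha α f y t = 0)
    (hfar : ∀ y t, s < t → dist x y < t → Aalpha α f y t ≤ M * (t / s) ^ a) :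
    Salpha α 1 f x ≤ M * √(volume.real (ball (0 : Rn n) 1) / (-(2 * a))) := by
  obtain ⟨hint, heq⟩ :=
    integrableOn_coneAbove_and_setIntegral_sq_rpow_div (volume : Measure (Rn n)) x hs ha
  rw [finrank_euclideanSpace_fin] at hint heq
  set c := volume.real (ball (0 : Rn n) 1)
  have hcone : {p : Rn n × ℝ | 0 < p.2 ∧ dist x p.1 < 1 * p.2} = coneAbove x 0 := by
    simp [coneAbove]
  have hsub : coneAbove x s ⊆ coneAbove x 0 := fun p hp => ⟨hs.trans hp.1, hp.2⟩
  have hsa : 0 < s ^ a := Real.rpow_pos_of_pos hs a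
  rw [Salpha, hcone, setIntegral_eq_of_subset_of_forall_sdiff_eq_zero
    (measurableSet_coneAbove x 0) hsub fun p ⟨hp, hps⟩ => by
      rw [hnear p.1 p.2 hp.1 (not_lt.mp fun h => hps ⟨h, hp.2⟩) hp.2]; simp]
  calc √(∫ p in coneAbove x s, Aalpha α f p.1 p.2 ^ 2 / p.2 ^ (n + 1))
      ≤ √(∫ p in coneAbove x s, (M / s ^ a) ^ 2 * ((p.2 ^ a) ^ 2 / p.2 ^ (n + 1))) := by
        refine Real.sqrt_le_sqrt (integral_mono_of_nonneg ?_ (hint.const_mul _) ?_)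
        · refine ae_restrict_of_forall_mem (measurableSet_coneAbove x s) fun p hp => ?_
          have : 0 < p.2 := hs.trans hp.1
          positivity
        · refine ae_restrict_of_forall_mem (measurableSet_coneAbove x s) fun p hp => ?_
          have hp2 : 0 < p.2 := hs.trans hp.1
          have hbound : Aalpha α f p.1 p.2 ≤ M / s ^ a * p.2 ^ a := by
            simpa only [Real.div_rpow hp2.le hs.le, mul_div_assoc', div_mul_eq_mul_div]
              using hfar p.1 p.2 hp.1 hp.2
          calc Aalpha α f p.1 p.2 ^ 2 / p.2 ^ (n + 1)
              ≤ (M / s ^ a * p.2 ^ a) ^ 2 / p.2 ^ (n + 1) := by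
                gcongr
                exact Aalpha_nonneg f p.1 p.2
            _ = (M / s ^ a) ^ 2 * ((p.2 ^ a) ^ 2 / p.2 ^ (n + 1)) := by ring
    _ = √((M / s ^ a * s ^ a) ^ 2 * (c / (-(2 * a)))) := by
        rw [integral_const_mul, Measure.volume_eq_prod, heq, mul_pow, mul_comm c, mul_div_assoc,
          mul_assoc]
    _ = M * √(c / (-(2 * a))) := by
        rw [div_mul_cancel₀ _ hsa.ne',
          Real.sqrt_mul' _ (div_nonneg measureReal_nonneg (by linarith)), Real.sqrt_sq hM]

lemma Salpha_le_of_morreyBound_of_forall_ball_eq_zero (hn : 0 < n) {Φ : ℝ → ℝ} {γ : ℝ}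
    (hγ0 : 0 ≤ γ) (hγn : γ < n) (hΦpos : ∀ r, 0 < r → 0 < Φ r)
    (hΦmono : ∀ r s, 0 < r → r ≤ s → Φ r ≤ Φ s) (hΦdoub : ∀ r, 0 < r → Φ (2 * r) ≤ 2 ^ γ * Φ r)
    {f : Rn n → ℝ} (hf : LocallyIntegrable f volume) {A : ℝ} (hA : 0 ≤ A)
    (hM : MorreyBound 1 Φ f A) {x₀ : Rn n} {r : ℝ} (hr : 0 < r)
    (hf0 : ∀ y ∈ ball x₀ (2 * r), f y = 0) {x : Rn n} (hx : x ∈ ball x₀ r) :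
    Salpha α 1 f x
      ≤ 3 ^ α * 4 ^ γ * 3 ^ n * A * Φ r / r ^ n
          * √(volume.real (ball (0 : Rn n) 1) / (2 * (n - γ))) := by
  have hs : 0 < r / 3 := by positivity
  have hΦs := hΦpos (r / 3) hs
  -- below height `r / 3` the ball `B(y, 2t)` seen by `A_α f (y, t)` lies inside `B(x₀, 2r)`
  have hnear : ∀ y t, 0 < t → t ≤ r / 3 → dist x y < t → Aalpha α f y t = 0 :=
    fun y t ht hts hxy => Aalpha_eq_zero_of_forall_ball_eq_zero ht fun z hz => hf0 z <| by
      rw [mem_ball] at hz hx ⊢; linarith [dist_triangle4 z y x x₀, dist_comm x y]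
  calc Salpha α 1 f x
      ≤ 3 ^ α * 4 ^ γ * A * Φ (r / 3) / (r / 3) ^ n
          * √(volume.real (ball (0 : Rn n) 1) / (-(2 * (γ - n)))) :=
        Salpha_le_of_le_rpow hs (sub_neg.mpr hγn) (by positivity) hnear fun y t hst _ =>
          Aalpha_le_of_morreyBound hn hγ0 hΦmono hΦdoub hf hA hM y hs hΦs.le hst.le
    _ ≤ 3 ^ α * 4 ^ γ * A * Φ r / (r / 3) ^ n
          * √(volume.real (ball (0 : Rn n) 1) / (-(2 * (γ - n)))) := by
        gcongr
        exact hΦmono _ _ hs (by linarith)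
    _ = _ := by
        rw [div_pow, show -(2 * (γ - n)) = 2 * (n - γ) by ring]
        field_simp

end IntrinsicSquareFunction

theorem salpha_far_part_pointwise_L1_general
    (n : ℕ) (hn : 0 < n) (α D : ℝ)
    (Φ : ℝ → ℝ) (hΦpos : ∀ r : ℝ, 0 < r → 0 < Φ r)
    (hΦmono : ∀ r s : ℝ, 0 < r → r ≤ s → Φ r ≤ Φ s)
    (hD1 : 1 ≤ D) (hD2 : D < 2 ^ n)
    (hΦdoub : ∀ r : ℝ, 0 < r → Φ (2 * r) ≤ D * Φ r) :
    ∃ C : ℝ, 0 < C ∧ ∀ f : Rn n → ℝ, LocallyIntegrable f volume →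
      ∀ A : ℝ, 0 ≤ A → MorreyBound 1 Φ f A →
      ∀ (x₀ : Rn n) (r : ℝ), 0 < r → (∀ y ∈ ball x₀ (2 * r), f y = 0) →
      ∀ x ∈ ball x₀ r,
        Salpha α 1 f x ≤ C * A * (Φ r / (volume (ball x₀ r)).toReal) := by
  obtain ⟨γ, hγ0, hγn, rfl⟩ := exists_two_rpow_eq_of_one_le_of_lt_two_pow hD1 hD2
  set c := volume.real (ball (0 : Rn n) 1)
  have hc : 0 < c := ENNReal.toReal_pos (measure_ball_pos _ _ one_pos).ne' measure_ball_lt_top.ne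
  have hnγ : 0 < (n : ℝ) - γ := sub_pos.mpr hγn
  refine ⟨3 ^ α * 4 ^ γ * 3 ^ n * c * √(c / (2 * (n - γ))), by positivity, ?_⟩
  intro f hf A hA hM x₀ r hr hf0 x hx
  have hvol : (volume (ball x₀ r)).toReal = r ^ n * c := by
    rw [Measure.addHaar_ball_of_pos _ _ hr, ENNReal.toReal_mul,
      ENNReal.toReal_ofReal (by positivity), finrank_euclideanSpace_fin]
    rfl
  calc Salpha α 1 f x ≤ 3 ^ α * 4 ^ γ * 3 ^ n * A * Φ r / r ^ n * √(c / (2 * (n - γ))) :=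
        Salpha_le_of_morreyBound_of_forall_ball_eq_zero hn hγ0 hγn hΦpos hΦmono hΦdoub hf hA hM hr
          hf0 hx
    _ = _ := by
        rw [hvol]
        field_simp

/-- **Inequality (2.7).** Let `0 < α ≤ 1` and let `Φ` be positive increasing and doubling
with constant `1 ≤ D < 2ⁿ`.  If `f ∈ L^{1,Φ}` vanishes on `B(x₀,2r)`, then for all
`x ∈ B(x₀,r)`, `S_α(f)(x) ≤ C ‖f‖_{L^{1,Φ}} Φ(r)/|B(x₀,r)|`. -/
theorem salpha_far_part_pointwise_L1
    (n : ℕ) (hn : 0 < n) (α D : ℝ) (hα0 : 0 < α) (hα1 : α ≤ 1)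
    (Φ : ℝ → ℝ) (hΦpos : ∀ r : ℝ, 0 < r → 0 < Φ r)
    (hΦmono : ∀ r s : ℝ, 0 < r → r ≤ s → Φ r ≤ Φ s)
    (hD1 : 1 ≤ D) (hD2 : D < 2 ^ n)
    (hΦdoub : ∀ r : ℝ, 0 < r → Φ (2 * r) ≤ D * Φ r) :
    ∃ C : ℝ, 0 < C ∧ ∀ f : Rn n → ℝ, LocallyIntegrable f volume →
      ∀ A : ℝ, 0 ≤ A → MorreyBound 1 Φ f A →
      ∀ (x₀ : Rn n) (r : ℝ), 0 < r → (∀ y ∈ ball x₀ (2 * r), f y = 0) →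
      ∀ x ∈ ball x₀ r,
        Salpha α 1 f x ≤ C * A * (Φ r / (volume (ball x₀ r)).toReal) :=
  salpha_far_part_pointwise_L1_general n hn α D Φ hΦpos hΦmono hD1 hD2 hΦdoub
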